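/- arXiv:2409.00033 — 2 statements merged into one kernel-verified Lean document; each statement's English description precedes it below -/
import Mathlib

section
/- If S is the union of L translated copies of a reference set S₁ of integers, namely Sₗ = S₁ + (l-1)Δ for l = 1,…,L where Δ = μ + κ, κ = max S₁ - min S₁ is the aperture of S₁, and μ > κ, then the difference coarray of S is the disjoint union of 2L-1 translated copies of the difference coarray of S₁, hence |D(S)| = (2L-1)·|D(S₁)|. -/
/-- Difference coarray of a finite set of integer sensor positions. -/
def diffCoarray (S : Finset ℤ) : Finset ℤ :=
  (S ×ˢ S).image (fun p => p.1 - p.2)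

/-!
Writing `T = {0, Δ, …, (L-1)Δ}`, the array is the sumset `S = S₁ + T`, so
`D(S) = D(S₁) + D(T)` with `D(T) = Δ·{-(L-1), …, L-1}`. Every element of `D(S₁)` has absolute
value at most `κ`, and `Δ > 2κ`, so each sum `d + kΔ` determines `k` and `d`: the translates
`D(S₁) + kΔ` are pairwise disjoint.
-/

open Finset
open scoped Pointwise

lemma add_eq_biUnion_image_add_right {α : Type*} [DecidableEq α] [Add α] (s t : Finset α) :
    s + t = t.biUnion (fun b => s.image (· + b)) :=
  biUnion_image_right.symm

lemma diffCoarray_eq_sub (S : Finset ℤ) : diffCoarray S = S - S :=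
  sub_def.symm

lemma diffCoarray_add (A B : Finset ℤ) :
    diffCoarray (A + B) = diffCoarray A + diffCoarray B := by
  simp only [diffCoarray_eq_sub, add_sub_add_comm]

lemma diffCoarray_image_mul_right (s : Finset ℤ) (Δ : ℤ) :
    diffCoarray (s.image (· * Δ)) = (diffCoarray s).image (· * Δ) := by
  simp only [diffCoarray_eq_sub]
  exact (image_image₂_distrib fun a b => sub_mul a b Δ).symm

lemma diffCoarray_image_natCast_range (L : ℕ) :
    diffCoarray ((range L).image (Nat.cast : ℕ → ℤ)) = Icc (-(L - 1 : ℤ)) (L - 1) := by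
  ext k
  simp only [diffCoarray_eq_sub, mem_sub, mem_image, mem_range, mem_Icc]
  constructor
  · rintro ⟨_, ⟨a, ha, rfl⟩, _, ⟨b, hb, rfl⟩, rfl⟩
    omega
  · intro hk
    exact ⟨_, ⟨(max k 0).toNat, by omega, rfl⟩, _, ⟨(max (-k) 0).toNat, by omega, rfl⟩, by omega⟩

lemma abs_le_of_mem_diffCoarray {S : Finset ℤ} (hS : S.Nonempty) {d : ℤ}
    (hd : d ∈ diffCoarray S) : |d| ≤ S.max' hS - S.min' hS := by
  rw [diffCoarray_eq_sub, mem_sub] at hd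
  obtain ⟨a, ha, b, hb, rfl⟩ := hd
  have := S.le_max' a ha
  have := S.min'_le a ha
  have := S.le_max' b hb
  have := S.min'_le b hb
  exact abs_sub_le_iff.2 ⟨by linarith, by linarith⟩

lemma eq_of_add_mul_eq_add_mul {a a' k k' κ Δ : ℤ} (ha : |a| ≤ κ) (ha' : |a'| ≤ κ)
    (hΔ : 2 * κ < Δ) (h : a + k * Δ = a' + k' * Δ) : k = k' := by
  have hΔ₀ : 0 < Δ := by linarith [abs_nonneg a]
  have hsmall : |k - k'| * Δ < 1 * Δ :=
    calc |k - k'| * Δ = |a' - a| := by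
          rw [show a' - a = (k - k') * Δ by linarith, abs_mul, abs_of_pos hΔ₀]
      _ ≤ |a'| + |a| := abs_sub _ _
      _ < 1 * Δ := by linarith
  have := abs_lt.1 (lt_of_mul_lt_mul_right hsmall hΔ₀.le)
  omega

lemma card_add_image_mul_right {A K : Finset ℤ} {κ Δ : ℤ} (hA : ∀ a ∈ A, |a| ≤ κ)
    (hΔ : 2 * κ < Δ) (hκ : 0 ≤ κ) : #(A + K.image (· * Δ)) = #A * #K := by
  have hinj : Function.Injective (· * Δ : ℤ → ℤ) := mul_left_injective₀ (by omega)
  rw [← card_image_of_injective K hinj, card_add_iff]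
  rintro ⟨a, _⟩ hp ⟨a', _⟩ hq h
  simp only [coe_image, Set.mem_prod, mem_coe, Set.mem_image] at hp hq h
  obtain ⟨ha, k, -, rfl⟩ := hp
  obtain ⟨ha', k', -, rfl⟩ := hq
  obtain rfl := eq_of_add_mul_eq_add_mul (hA a ha) (hA a' ha') hΔ h
  rw [add_left_inj] at h
  rw [h]

theorem typeII_diffCoarray_disjoint_union_general
    (S₁ : Finset ℤ) (h₁ : S₁.Nonempty) (L : ℕ) (μ : ℤ)
    (κ : ℤ) (hκ : κ = S₁.max' h₁ - S₁.min' h₁) (hμ : μ > κ)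
    (Δ : ℤ) (hΔ : Δ = μ + κ)
    (S : Finset ℤ)
    (hS : S = (Finset.range L).biUnion (fun l => S₁.image (fun x => x + (l : ℤ) * Δ))) :
    diffCoarray S =
      (Finset.Icc (-(L - 1 : ℤ)) ((L : ℤ) - 1)).biUnion
        (fun k => (diffCoarray S₁).image (fun x => x + k * Δ)) ∧
    (diffCoarray S).card = (2 * L - 1) * (diffCoarray S₁).card := by
  have hκ₀ : 0 ≤ κ := hκ ▸ sub_nonneg.2 (S₁.min'_le_max' h₁)
  have hsum : S = S₁ + ((range L).image (Nat.cast : ℕ → ℤ)).image (· * Δ) := by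
    rw [hS, add_eq_biUnion_image_add_right, image_image, image_biUnion]
    rfl
  have hD : diffCoarray S = diffCoarray S₁ + (Icc (-(L - 1 : ℤ)) (L - 1)).image (· * Δ) := by
    rw [hsum, diffCoarray_add, diffCoarray_image_mul_right, diffCoarray_image_natCast_range]
  refine ⟨by rw [hD, add_eq_biUnion_image_add_right, image_biUnion], ?_⟩
  rw [hD, card_add_image_mul_right (fun d hd => hκ ▸ abs_le_of_mem_diffCoarray h₁ hd)
    (by omega) hκ₀, Int.card_Icc, mul_comm]
  congr 1
  omega

theorem typeII_diffCoarray_disjoint_union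
    (S₁ : Finset ℤ) (h₁ : S₁.Nonempty) (L : ℕ) (hL : 1 ≤ L) (μ : ℤ)
    (κ : ℤ) (hκ : κ = S₁.max' h₁ - S₁.min' h₁) (hμ : μ > κ)
    (Δ : ℤ) (hΔ : Δ = μ + κ)
    (S : Finset ℤ)
    (hS : S = (Finset.range L).biUnion (fun l => S₁.image (fun x => x + (l : ℤ) * Δ))) :
    diffCoarray S =
      (Finset.Icc (-(L - 1 : ℤ)) ((L : ℤ) - 1)).biUnion
        (fun k => (diffCoarray S₁).image (fun x => x + k * Δ)) ∧
    (diffCoarray S).card = (2 * L - 1) * (diffCoarray S₁).card :=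
  typeII_diffCoarray_disjoint_union_general S₁ h₁ L μ κ hκ hμ Δ hΔ S hS
end

section
/- For a type-II array built from subarrays with hole-free difference coarrays and 1 ≤ μ ≤ κ, the bound is achieved with equality: |D(S)| = L(sDoF−1) + 2(L−1)μ + 1, i.e., the difference coarray of the whole array equals the full integer interval [−(L−1)(μ+κ)−κ, (L−1)(μ+κ)+κ]. -/
open Finset

theorem mem_diffCoarray {S : Finset ℤ} {d : ℤ} :
    d ∈ diffCoarray S ↔ ∃ a ∈ S, ∃ b ∈ S, a - b = d := by
  simp only [diffCoarray, mem_image, mem_product, Prod.exists, and_assoc, exists_and_left]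

theorem neg_mem_diffCoarray {S : Finset ℤ} {d : ℤ} (hd : d ∈ diffCoarray S) :
    -d ∈ diffCoarray S := by
  obtain ⟨a, ha, b, hb, rfl⟩ := mem_diffCoarray.1 hd
  exact mem_diffCoarray.2 ⟨b, hb, a, ha, by ring⟩

theorem Icc_neg_subset_diffCoarray {S : Finset ℤ} {M : ℤ} (h : Icc 0 M ⊆ diffCoarray S) :
    Icc (-M) M ⊆ diffCoarray S := by
  intro d hd
  rw [mem_Icc] at hd
  rcases le_total 0 d with hd0 | hd0
  · exact h (mem_Icc.2 ⟨hd0, hd.2⟩)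
  · simpa using neg_mem_diffCoarray (h (mem_Icc.2 (⟨by omega, by omega⟩ : 0 ≤ -d ∧ -d ≤ M)))

theorem Int.card_Icc_neg_self {M : ℤ} (hM : 0 ≤ M) : ((Icc (-M) M).card : ℤ) = 2 * M + 1 := by
  rw [Int.card_Icc, Int.toNat_of_nonneg (by omega)]
  ring

theorem exists_sub_mul_mem_Icc {κ Δ d : ℤ} (hΔ : Δ ≤ 2 * κ + 1) (n : ℕ)
    (hd : d ∈ Icc 0 (n * Δ + κ)) : ∃ k ≤ n, d - k * Δ ∈ Icc (-κ) κ := by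
  induction n with
  | zero => exact ⟨0, le_rfl, by simp only [mem_Icc] at hd ⊢; omega⟩
  | succ n ih =>
    rw [mem_Icc] at hd
    by_cases hdn : d ≤ n * Δ + κ
    · obtain ⟨k, hk, hdk⟩ := ih (mem_Icc.2 ⟨hd.1, hdn⟩)
      exact ⟨k, hk.trans n.le_succ, hdk⟩
    · refine ⟨n + 1, le_rfl, mem_Icc.2 ⟨?_, ?_⟩⟩ <;> push_cast at hd hdn ⊢ <;> linarith

def typeIIArray (A : Finset ℤ) (Δ : ℤ) (L : ℕ) : Finset ℤ :=
  (range L).biUnion (fun l => A.image (fun x => x + (l : ℤ) * Δ))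

theorem mem_typeIIArray {A : Finset ℤ} {Δ x : ℤ} {L : ℕ} :
    x ∈ typeIIArray A Δ L ↔ ∃ l < L, ∃ a ∈ A, a + l * Δ = x := by
  simp only [typeIIArray, mem_biUnion, mem_range, mem_image]

variable {A : Finset ℤ} {κ Δ : ℤ}

theorem diffCoarray_typeIIArray_subset (hA : diffCoarray A ⊆ Icc (-κ) κ) (hΔ : 0 ≤ Δ) (n : ℕ) :
    diffCoarray (typeIIArray A Δ (n + 1)) ⊆ Icc (-(n * Δ + κ)) (n * Δ + κ) := by
  intro d hd
  obtain ⟨x, hx, y, hy, rfl⟩ := mem_diffCoarray.1 hd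
  obtain ⟨k, hk, a, ha, rfl⟩ := mem_typeIIArray.1 hx
  obtain ⟨j, hj, b, hb, rfl⟩ := mem_typeIIArray.1 hy
  have hab := mem_Icc.1 (hA (mem_diffCoarray.2 ⟨a, ha, b, hb, rfl⟩))
  have hkΔ : (k : ℤ) * Δ ≤ n * Δ := mul_le_mul_of_nonneg_right (by omega) hΔ
  have hjΔ : (j : ℤ) * Δ ≤ n * Δ := mul_le_mul_of_nonneg_right (by omega) hΔ
  have hk0 : 0 ≤ (k : ℤ) * Δ := by positivity
  have hj0 : 0 ≤ (j : ℤ) * Δ := by positivity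
  rw [mem_Icc]
  constructor <;> linarith [hab.1, hab.2]

theorem Icc_subset_diffCoarray_typeIIArray (hA : Icc (-κ) κ ⊆ diffCoarray A)
    (hΔ : Δ ≤ 2 * κ + 1) (n : ℕ) :
    Icc (-(n * Δ + κ)) (n * Δ + κ) ⊆ diffCoarray (typeIIArray A Δ (n + 1)) := by
  refine Icc_neg_subset_diffCoarray fun d hd => ?_
  obtain ⟨k, hk, hdk⟩ := exists_sub_mul_mem_Icc hΔ n hd
  obtain ⟨a, ha, b, hb, hab⟩ := mem_diffCoarray.1 (hA hdk)
  refine mem_diffCoarray.2 ⟨a + k * Δ, ?_, b, ?_, by linarith⟩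
  · exact mem_typeIIArray.2 ⟨k, by omega, a, ha, rfl⟩
  · exact mem_typeIIArray.2 ⟨0, n.succ_pos, b, hb, by simp⟩

theorem diffCoarray_typeIIArray (hA : diffCoarray A = Icc (-κ) κ) (hΔ₀ : 0 ≤ Δ)
    (hΔ : Δ ≤ 2 * κ + 1) (n : ℕ) :
    diffCoarray (typeIIArray A Δ (n + 1)) = Icc (-(n * Δ + κ)) (n * Δ + κ) :=
  (diffCoarray_typeIIArray_subset hA.le hΔ₀ n).antisymm
    (Icc_subset_diffCoarray_typeIIArray hA.ge hΔ n)

theorem typeII_diffCoarray_equality_general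
    (S₁ : Finset ℤ)
    (κ : ℤ)
    (hholefree : diffCoarray S₁ = Finset.Icc (-κ) κ)
    (μ : ℤ) (hμ1 : 1 ≤ μ) (hμ2 : μ ≤ κ)
    (L : ℕ) (hL : 1 ≤ L) (Δ : ℤ) (hΔ : Δ = μ + κ)
    (S : Finset ℤ)
    (hS : S = (Finset.range L).biUnion (fun l => S₁.image (fun x => x + (l : ℤ) * Δ)))
    (sDoF : ℤ) (hsDoF : sDoF = 2 * κ + 1) :
    diffCoarray S = Finset.Icc (-(((L : ℤ) - 1) * Δ + κ)) (((L : ℤ) - 1) * Δ + κ) ∧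
    ((diffCoarray S).card : ℤ) = (L : ℤ) * (sDoF - 1) + 2 * ((L : ℤ) - 1) * μ + 1 := by
  obtain ⟨n, rfl⟩ : ∃ n, L = n + 1 := ⟨L - 1, by omega⟩
  have hT : S = typeIIArray S₁ Δ (n + 1) := hS
  have hD := diffCoarray_typeIIArray (Δ := Δ) hholefree (by omega) (by omega) n
  simp only [hT, Nat.cast_add, Nat.cast_one, add_sub_cancel_right, hD, true_and]
  have hM : 0 ≤ (n : ℤ) * Δ + κ := add_nonneg (mul_nonneg n.cast_nonneg (by omega)) (by omega)
  rw [Int.card_Icc_neg_self hM, hΔ, hsDoF]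
  ring

theorem typeII_diffCoarray_equality
    (S₁ : Finset ℤ) (h₁ : S₁.Nonempty) (hmin : S₁.min' h₁ = 0)
    (κ : ℤ) (hκ : κ = S₁.max' h₁)
    (hholefree : diffCoarray S₁ = Finset.Icc (-κ) κ)
    (μ : ℤ) (hμ1 : 1 ≤ μ) (hμ2 : μ ≤ κ)
    (L : ℕ) (hL : 1 ≤ L) (Δ : ℤ) (hΔ : Δ = μ + κ)
    (S : Finset ℤ)
    (hS : S = (Finset.range L).biUnion (fun l => S₁.image (fun x => x + (l : ℤ) * Δ)))
    (sDoF : ℤ) (hsDoF : sDoF = 2 * κ + 1) :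
    diffCoarray S = Finset.Icc (-(((L : ℤ) - 1) * Δ + κ)) (((L : ℤ) - 1) * Δ + κ) ∧
    ((diffCoarray S).card : ℤ) = (L : ℤ) * (sDoF - 1) + 2 * ((L : ℤ) - 1) * μ + 1 :=
  typeII_diffCoarray_equality_general S₁ κ hholefree μ hμ1 hμ2 L hL Δ hΔ S hS sDoF hsDoF
end
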